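/- arXiv:0910.1390 — 4 statements merged into one kernel-verified Lean document; each statement's English description precedes it below -/
import Mathlib

section
/- Let (X, μ) be a probability measure space and f : X → ℝ a bounded measurable function. If there exists a constant C₁ ≥ 0 such that exp(-inf f) ≤ exp(C₁) · ∫ exp(-f) dμ, then the set {x : f(x) ≤ inf f + C₁ + 1} has measure at least exp(-C₁)/4. -/
/-!
With `m = essInf f`, bound `exp (-f)` by `exp (-m)` almost everywhere and by `exp (-(m + C₁ + 1))`
off the sublevel set `S`. Then `∫ exp (-f) ≤ exp (-m) (μ S + exp (-C₁ - 1))`, and the hypothesis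
gives `exp (-C₁) (1 - e⁻¹) ≤ μ S`, while `1 - e⁻¹ ≥ 1 / 4`.
-/

open MeasureTheory Real

section

variable {X : Type*} [MeasurableSpace X] {μ : Measure X}

theorem setIntegral_le_const_mul_measureReal [IsFiniteMeasure μ] {g : X → ℝ} {s : Set X}
    (hg : Integrable g μ) {c : ℝ} (hgc : ∀ᵐ x ∂μ.restrict s, g x ≤ c) :
    ∫ x in s, g x ∂μ ≤ c * μ.real s := by
  calc ∫ x in s, g x ∂μ ≤ ∫ _ in s, c ∂μ :=
        setIntegral_mono_ae_restrict hg.integrableOn (integrableOn_const (measure_ne_top _ _)) hgc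
    _ = c * μ.real s := by rw [setIntegral_const, smul_eq_mul, mul_comm]

theorem integral_le_mul_measureReal_add [IsProbabilityMeasure μ] {g : X → ℝ} {s : Set X}
    (hs : MeasurableSet s) (hg : Integrable g μ) {a b : ℝ} (hb : 0 ≤ b)
    (hga : ∀ᵐ x ∂μ, g x ≤ a) (hgb : ∀ x ∉ s, g x ≤ b) :
    ∫ x, g x ∂μ ≤ a * μ.real s + b := by
  have h_in : ∫ x in s, g x ∂μ ≤ a * μ.real s :=
    setIntegral_le_const_mul_measureReal hg (ae_restrict_of_ae hga)
  have h_out : ∫ x in sᶜ, g x ∂μ ≤ b * μ.real sᶜ :=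
    setIntegral_le_const_mul_measureReal hg ((ae_restrict_mem hs.compl).mono hgb)
  calc ∫ x, g x ∂μ = ∫ x in s, g x ∂μ + ∫ x in sᶜ, g x ∂μ := (integral_add_compl hs hg).symm
    _ ≤ a * μ.real s + b * μ.real sᶜ := add_le_add h_in h_out
    _ ≤ a * μ.real s + b := by
        gcongr
        exact mul_le_of_le_one_right hb measureReal_le_one

theorem integrable_exp_neg_of_le [IsFiniteMeasure μ] {f : X → ℝ} (hf : Measurable f) {M : ℝ}
    (hM : ∀ x, -M ≤ f x) : Integrable (fun x ↦ exp (-f x)) μ :=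
  .of_bound hf.neg.exp.aestronglyMeasurable (exp M) <| .of_forall fun x ↦ by
    rw [norm_of_nonneg (exp_pos _).le]
    exact exp_le_exp.2 (by linarith [hM x])

end

theorem le_of_exp_neg_le_exp_mul {m C t : ℝ}
    (h : exp (-m) ≤ exp C * (exp (-m) * t + exp (-(m + C + 1)))) : exp (-C) / 4 ≤ t := by
  have h_split : exp (-(m + C + 1)) = exp (-m) * exp (-C) * exp (-1) := by
    rw [← exp_add, ← exp_add]; ring_nf
  have h_inv : exp C * exp (-C) = 1 := by rw [← exp_add, add_neg_cancel, exp_zero]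
  have h_scaled : exp (-m) * exp (-C) ≤ exp (-m) * (t + exp (-C) * exp (-1)) :=
    calc exp (-m) * exp (-C) ≤ exp C * (exp (-m) * t + exp (-(m + C + 1))) * exp (-C) := by
          gcongr
      _ = exp (-m) * (t + exp (-C) * exp (-1)) := by
          rw [h_split]
          linear_combination (exp (-m) * t + exp (-m) * exp (-C) * exp (-1)) * h_inv
  have h_cancel : exp (-C) ≤ t + exp (-C) * exp (-1) := le_of_mul_le_mul_left h_scaled (exp_pos _)
  have h_e : exp (-1) < 3 / 4 := exp_neg_one_lt_d9.trans (by norm_num)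
  nlinarith [exp_pos (-C)]

theorem sublevel_measure_lower_bound_general
    {X : Type*} [MeasurableSpace X] (μ : Measure X) [IsProbabilityMeasure μ]
    (f : X → ℝ) (hf : Measurable f) (hbd : ∃ M : ℝ, ∀ x, |f x| ≤ M)
    (C₁ : ℝ)
    (h : Real.exp (-(essInf f μ)) ≤ Real.exp C₁ * ∫ x, Real.exp (-(f x)) ∂μ) :
    ENNReal.ofReal (Real.exp (-C₁) / 4) ≤ μ {x | f x ≤ essInf f μ + C₁ + 1} := by
  obtain ⟨M, hM⟩ := hbd
  have h_lower : ∀ x, -M ≤ f x := fun x ↦ (abs_le.1 (hM x)).1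
  set m := essInf f μ
  set S := {x | f x ≤ m + C₁ + 1}
  have h_essInf : ∀ᵐ x ∂μ, m ≤ f x :=
    ae_essInf_le ⟨-M, Filter.eventually_map.2 (.of_forall h_lower)⟩
  have h_integral : ∫ x, exp (-f x) ∂μ ≤ exp (-m) * μ.real S + exp (-(m + C₁ + 1)) :=
    integral_le_mul_measureReal_add (hf measurableSet_Iic) (integrable_exp_neg_of_le hf h_lower)
      (exp_pos _).le (h_essInf.mono fun x hx ↦ exp_le_exp.2 (neg_le_neg hx))
      (fun x hx ↦ exp_le_exp.2 (neg_le_neg (not_le.1 hx).le))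
  exact ENNReal.ofReal_le_of_le_toReal <| le_of_exp_neg_le_exp_mul <|
    h.trans (mul_le_mul_of_nonneg_left h_integral (exp_pos _).le)

/-- Lemma 3.2 of Tosatti–Weinkove: if `exp(-essInf f) ≤ exp C₁ · ∫ exp (-f) dμ` on a
probability space, then the sublevel set `{f ≤ essInf f + C₁ + 1}` has measure
at least `exp (-C₁) / 4`. -/
theorem sublevel_measure_lower_bound
    {X : Type*} [MeasurableSpace X] (μ : Measure X) [IsProbabilityMeasure μ]
    (f : X → ℝ) (hf : Measurable f) (hbd : ∃ M : ℝ, ∀ x, |f x| ≤ M)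
    (C₁ : ℝ) (hC₁ : 0 ≤ C₁)
    (h : Real.exp (-(essInf f μ)) ≤ Real.exp C₁ * ∫ x, Real.exp (-(f x)) ∂μ) :
    ENNReal.ofReal (Real.exp (-C₁) / 4) ≤ μ {x | f x ≤ essInf f μ + C₁ + 1} :=
  sublevel_measure_lower_bound_general μ f hf hbd C₁ h
end

section
/- Let (X, μ) be a finite measure space and ψ : X → ℝ a nonnegative integrable function with ψ ∈ L² (μ). Suppose there exist constants δ > 0 and C ≥ 0 such that the set S = {ψ ≤ C} satisfies μ(S) ≥ δ, and a constant C' ≥ 0 such that ‖ψ - ψ̄‖_{L²} ≤ C' · ‖ψ‖_{L¹}^{1/2}, where ψ̄ = (∫ ψ dμ)/μ(X) is the average of ψ. Then there exists a constant C'' depending only on δ, C, C', and μ(X) such that ‖ψ‖_{L¹} ≤ C''. -/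
/-!
Let `I = ∫ ψ` and `c = I / V` the mean of `ψ`. If `c > C`, then on `{ψ ≤ C}`, a set of measure
at least `δ`, `ψ` stays at distance at least `c - C` from its mean, so by Chebyshev
`δ (c - C)² ≤ ‖ψ - c‖₂² ≤ C'² I`. This is the quadratic inequality
`(I - C V)² ≤ (C'² V² / δ) I` in `I`, which forces `I ≤ 2 C V + C'² V² / δ`.
-/

open MeasureTheory Real

theorem measureReal_sublevel_mul_sq_le_integral_sq_sub {X : Type*} [MeasurableSpace X]
    {μ : Measure X} [IsFiniteMeasure μ] {f : X → ℝ} (hf : MemLp f 2 μ) {a c : ℝ} (hac : a ≤ c) :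
    μ.real {x | f x ≤ a} * (c - a) ^ 2 ≤ ∫ x, (f x - c) ^ 2 ∂μ := by
  have hsub : {x | f x ≤ a} ⊆ {x | (c - a) ^ 2 ≤ (f x - c) ^ 2} := fun x (hx : f x ≤ a) ↦
    show (c - a) ^ 2 ≤ (f x - c) ^ 2 by nlinarith
  calc μ.real {x | f x ≤ a} * (c - a) ^ 2
      ≤ (c - a) ^ 2 * μ.real {x | (c - a) ^ 2 ≤ (f x - c) ^ 2} := by
        rw [mul_comm]; gcongr; exact measure_ne_top _ _
    _ ≤ ∫ x, (f x - c) ^ 2 ∂μ :=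
        mul_meas_ge_le_integral_of_nonneg (.of_forall fun _ ↦ sq_nonneg _)
          ((hf.sub (memLp_const c)).integrable_sq) _

theorem le_mul_sq_of_rpow_half_le {A I K : ℝ} (hI : 0 ≤ I) (hK : 0 ≤ K)
    (h : A ^ ((1 : ℝ) / 2) ≤ K * I ^ ((1 : ℝ) / 2)) : A ≤ K ^ 2 * I := by
  rw [← sqrt_eq_rpow, ← sqrt_eq_rpow, ← sqrt_sq hK, ← sqrt_mul (sq_nonneg K)] at h
  exact (sqrt_le_sqrt_iff (by positivity)).1 h

theorem le_two_mul_add_of_sq_sub_le_mul {t a K : ℝ} (ha : 0 ≤ a) (hK : 0 ≤ K)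
    (h : (t - a) ^ 2 ≤ K * t) : t ≤ 2 * a + K := by
  by_contra! hlt
  nlinarith [mul_pos (hlt.trans_le' (by positivity) : (0 : ℝ) < t) (sub_pos.2 hlt)]

/-- Combining a measure lower bound on a sublevel set with a Poincaré-type inequality
gives a bound on the `L¹` norm of a nonnegative function `ψ`, with constant depending
only on `δ`, `C`, `C'`, and the total measure `V`. -/
theorem L1_bound_from_sublevel_and_poincare
    (δ C C' V : ℝ) (hδ : 0 < δ) (hC : 0 ≤ C) (hC' : 0 ≤ C') (hV : 0 < V) :
    ∃ C'' : ℝ, ∀ (X : Type) (_ : MeasurableSpace X) (μ : Measure X),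
      IsFiniteMeasure μ → (μ Set.univ).toReal = V →
      ∀ ψ : X → ℝ, (∀ x, 0 ≤ ψ x) → Integrable ψ μ → MemLp ψ 2 μ →
      ENNReal.ofReal δ ≤ μ {x | ψ x ≤ C} →
      (∫ x, (ψ x - (∫ y, ψ y ∂μ) / V) ^ 2 ∂μ) ^ ((1 : ℝ) / 2)
        ≤ C' * (∫ x, ψ x ∂μ) ^ ((1 : ℝ) / 2) →
      ∫ x, ψ x ∂μ ≤ C'' := by
  refine ⟨2 * (C * V) + C' ^ 2 * V ^ 2 / δ, fun X _ μ _ _ ψ hψ0 _ hψ2 hS hP ↦ ?_⟩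
  set I := ∫ x, ψ x ∂μ
  have hI : 0 ≤ I := integral_nonneg hψ0
  rcases le_or_gt I (C * V) with hle | hlt
  · have : 0 ≤ C' ^ 2 * V ^ 2 / δ := by positivity
    nlinarith [mul_nonneg hC hV.le]
  have hδS : δ ≤ μ.real {x | ψ x ≤ C} :=
    (ENNReal.ofReal_le_iff_le_toReal (measure_ne_top _ _)).1 hS
  have hspread : δ * (I / V - C) ^ 2 ≤ ∫ x, (ψ x - I / V) ^ 2 ∂μ :=
    (mul_le_mul_of_nonneg_right hδS (sq_nonneg _)).trans
      (measureReal_sublevel_mul_sq_le_integral_sq_sub hψ2 (by rw [le_div_iff₀ hV]; linarith))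
  have hpoincare : ∫ x, (ψ x - I / V) ^ 2 ∂μ ≤ C' ^ 2 * I :=
    le_mul_sq_of_rpow_half_le hI hC' hP
  have hquad : (I - C * V) ^ 2 ≤ C' ^ 2 * V ^ 2 / δ * I := by
    have : (I / V - C) ^ 2 * V ^ 2 = (I - C * V) ^ 2 := by field_simp
    rw [← this, div_mul_eq_mul_div, le_div_iff₀ hδ]
    nlinarith [hspread.trans hpoincare, sq_nonneg V]
  exact le_two_mul_add_of_sq_sub_le_mul (by positivity) (by positivity) hquad
end

section
/- Let g be a bounded nonnegative measurable function on a finite measure space (X, μ), let β > 1 and p₀ > 0, and suppose ‖g‖_{L^{pβ}} ≤ C^{1/p} p^{1/p} ‖g‖_{L^p} for all p ≥ p₀, with C ≥ 1. Then ‖g‖_{L^∞} ≤ (∏_{k=0}^∞ (C β^k p₀)^{1/(β^k p₀)}) · ‖g‖_{L^{p₀}}, and the infinite product converges to a finite constant. -/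
/-!
Iterating the reverse Hölder inequality along `p_k = β^k p₀` bounds `‖g‖_{p_k}` by the partial
product `∏_{j<k} (C β^j p₀)^{1/(β^j p₀)}` times `‖g‖_{p₀}`; the logarithms of the factors are
`O(k β^{-k})`, so the product converges. Markov's inequality gives
`c · μ{g ≥ c}^{1/p} ≤ ‖g‖_p`, and since `μ{g ≥ c}^{1/p_k} → 1` whenever that measure is positive,
no level `c` above the limit of the bounds is exceeded on a set of positive measure.
-/

open MeasureTheory Real

open Filter Topology

lemma summable_log_div_geometric {β a c : ℝ} (hβ : 1 < β) (ha : 0 < a) (hc : 0 < c) :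
    Summable fun k : ℕ => log (a * β ^ k * c) / (β ^ k * c) := by
  have hβ0 : 0 < β := zero_lt_one.trans hβ
  have hr : ‖β⁻¹‖ < 1 := by
    rw [norm_inv, Real.norm_of_nonneg hβ0.le]
    exact inv_lt_one_of_one_lt₀ hβ
  have hgeom := summable_geometric_of_norm_lt_one hr
  have hpow := summable_pow_mul_geometric_of_norm_lt_one 1 hr
  refine ((hgeom.mul_left (log (a * c) / c)).add (hpow.mul_left (log β / c))).congr fun k => ?_
  have hβk : β ^ k ≠ 0 := pow_ne_zero k hβ0.ne'
  rw [mul_right_comm, log_mul (by positivity) hβk, log_mul ha.ne' hc.ne', log_pow]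
  simp only [inv_pow, pow_one]
  field_simp

lemma multipliable_rpow_one_div_geometric {β a c : ℝ} (hβ : 1 < β) (ha : 0 < a) (hc : 0 < c) :
    Multipliable fun k : ℕ => (a * β ^ k * c) ^ (1 / (β ^ k * c)) := by
  have hpos : ∀ k : ℕ, 0 < a * β ^ k * c := fun k => by
    have := zero_lt_one.trans hβ
    positivity
  refine Real.multipliable_of_summable_log (fun k => rpow_pos_of_pos (hpos k) _) ?_
  simpa only [log_rpow (hpos _), one_div_mul_eq_div] using summable_log_div_geometric hβ ha hc

lemma le_prod_range_mul_of_le_mul {N a : ℕ → ℝ} (ha : ∀ k, 0 ≤ a k)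
    (h : ∀ k, N (k + 1) ≤ a k * N k) (k : ℕ) : N k ≤ (∏ j ∈ Finset.range k, a j) * N 0 := by
  induction k with
  | zero => simp
  | succ k ih =>
    calc N (k + 1) ≤ a k * N k := h k
      _ ≤ a k * ((∏ j ∈ Finset.range k, a j) * N 0) := mul_le_mul_of_nonneg_left ih (ha k)
      _ = (∏ j ∈ Finset.range (k + 1), a j) * N 0 := by rw [Finset.prod_range_succ]; ring

section

variable {X : Type*} [MeasurableSpace X] {μ : Measure X} {g : X → ℝ}

lemma integrable_rpow_of_le [IsFiniteMeasure μ] (hg : Measurable g) (hpos : ∀ x, 0 ≤ g x)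
    {M : ℝ} (hM : ∀ x, g x ≤ M) {p : ℝ} (hp : 0 ≤ p) : Integrable (fun x => g x ^ p) μ :=
  Integrable.of_bound (hg.pow_const p).aestronglyMeasurable (M ^ p) <| .of_forall fun x => by
    rw [Real.norm_of_nonneg (rpow_nonneg (hpos x) p)]
    exact rpow_le_rpow (hpos x) (hM x) hp

lemma essSup_le_of_ae_le_of_nonneg (hpos : ∀ x, 0 ≤ g x) {c : ℝ} (hc : 0 ≤ c)
    (hgc : ∀ᵐ x ∂μ, g x ≤ c) : essSup g μ ≤ c := by
  rcases eq_or_ne μ 0 with rfl | hμ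
  · simpa [essSup, limsup_eq] using hc
  · have := ae_neBot.mpr hμ
    exact essSup_le_of_ae_le c hgc (isCoboundedUnder_le_of_eventually_le _ (.of_forall hpos))

lemma mul_measureReal_rpow_le_integral_rpow (hpos : ∀ x, 0 ≤ g x) {p : ℝ} (hp : 0 < p)
    (hint : Integrable (fun x => g x ^ p) μ) {c : ℝ} (hc : 0 ≤ c) :
    c * μ.real {x | c ≤ g x} ^ (1 / p) ≤ (∫ x, g x ^ p ∂μ) ^ (1 / p) := by
  have hmarkov := mul_meas_ge_le_integral_of_nonneg (.of_forall fun x => rpow_nonneg (hpos x) p)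
    hint (c ^ p)
  have hset : {x | c ^ p ≤ g x ^ p} = {x | c ≤ g x} := by
    ext x
    exact rpow_le_rpow_iff hc (hpos x) hp
  rw [hset] at hmarkov
  calc c * μ.real {x | c ≤ g x} ^ (1 / p) = (c ^ p * μ.real {x | c ≤ g x}) ^ (1 / p) := by
        rw [mul_rpow (rpow_nonneg hc p) measureReal_nonneg, ← rpow_mul hc,
          mul_one_div_cancel hp.ne', rpow_one]
    _ ≤ (∫ x, g x ^ p ∂μ) ^ (1 / p) := by gcongr

theorem essSup_le_of_tendsto_integral_rpow [IsFiniteMeasure μ] (hpos : ∀ x, 0 ≤ g x)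
    {ι : Type*} {l : Filter ι} [l.NeBot] {p u : ι → ℝ} {L : ℝ}
    (hp : Tendsto p l atTop) (hp_pos : ∀ i, 0 < p i)
    (hint : ∀ i, Integrable (fun x => g x ^ p i) μ)
    (hbound : ∀ i, (∫ x, g x ^ p i ∂μ) ^ (1 / p i) ≤ u i) (hu : Tendsto u l (𝓝 L)) :
    essSup g μ ≤ L := by
  have hL : 0 ≤ L := ge_of_tendsto' hu fun i =>
    (rpow_nonneg (integral_nonneg fun x => rpow_nonneg (hpos x) _) _).trans (hbound i)
  refine le_of_forall_gt_imp_ge_of_dense fun c hLc => ?_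
  have hc : 0 ≤ c := hL.trans hLc.le
  refine essSup_le_of_ae_le_of_nonneg hpos hc (ae_le_of_ae_lt (ae_iff.mpr ?_))
  by_contra hne
  have hm : 0 < μ.real {x | ¬g x < c} := by
    rw [measureReal_def]
    exact ENNReal.toReal_pos hne (measure_ne_top μ _)
  simp only [not_lt] at hm
  -- `μ{g ≥ c} ^ (1 / p i) → 1` as `p i → ∞`, so Markov's inequality at level `c` forces `c ≤ L`.
  have hinv : Tendsto (fun i => 1 / p i) l (𝓝 0) :=
    hp.inv_tendsto_atTop.congr fun i => (one_div (p i)).symm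
  have hlim : Tendsto (fun i => c * μ.real {x | c ≤ g x} ^ (1 / p i)) l (𝓝 c) := by
    simpa using ((continuousAt_const_rpow hm.ne').tendsto.comp hinv).const_mul c
  have := le_of_tendsto_of_tendsto hlim hu (.of_forall fun i =>
    (mul_measureReal_rpow_le_integral_rpow hpos (hp_pos i) (hint i) hc).trans (hbound i))
  linarith

end

/-- Standard Moser iteration with the explicit constant: if
`‖g‖_{L^{pβ}} ≤ C^{1/p} p^{1/p} ‖g‖_{L^p}` for all `p ≥ p₀`, then
`‖g‖_{L^∞} ≤ ∏_{k=0}^∞ (C β^k p₀)^{1/(β^k p₀)} · ‖g‖_{L^{p₀}}`, and the infinite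
product converges. -/
theorem moser_iteration_explicit
    {X : Type*} [MeasurableSpace X] (μ : Measure X) [IsFiniteMeasure μ]
    (g : X → ℝ) (hg : Measurable g) (hpos : ∀ x, 0 ≤ g x)
    (hbd : ∃ M : ℝ, ∀ x, g x ≤ M)
    (β p₀ C : ℝ) (hβ : 1 < β) (hp₀ : 0 < p₀) (hC : 1 ≤ C)
    (hiter : ∀ p : ℝ, p₀ ≤ p →
      (∫ x, g x ^ (p * β) ∂μ) ^ (1 / (p * β)) ≤
        C ^ (1 / p) * p ^ (1 / p) * (∫ x, g x ^ p ∂μ) ^ (1 / p)) :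
    Multipliable (fun k : ℕ => (C * β ^ k * p₀) ^ (1 / (β ^ k * p₀))) ∧
    essSup g μ ≤ (∏' k : ℕ, (C * β ^ k * p₀) ^ (1 / (β ^ k * p₀))) *
      (∫ x, g x ^ p₀ ∂μ) ^ (1 / p₀) := by
  obtain ⟨M, hM⟩ := hbd
  have hC₀ : 0 < C := zero_lt_one.trans_le hC
  have hpk : ∀ k : ℕ, 0 < β ^ k * p₀ := fun k => mul_pos (pow_pos (zero_lt_one.trans hβ) k) hp₀
  have hmult := multipliable_rpow_one_div_geometric hβ hC₀ hp₀
  have hstep : ∀ k : ℕ, (∫ x, g x ^ (β ^ (k + 1) * p₀) ∂μ) ^ (1 / (β ^ (k + 1) * p₀)) ≤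
      (C * β ^ k * p₀) ^ (1 / (β ^ k * p₀)) *
        (∫ x, g x ^ (β ^ k * p₀) ∂μ) ^ (1 / (β ^ k * p₀)) := fun k => by
    rw [mul_assoc C, mul_rpow hC₀.le (hpk k).le, pow_succ, mul_right_comm]
    exact hiter _ (le_mul_of_one_le_left hp₀.le (one_le_pow₀ hβ.le))
  refine ⟨hmult, essSup_le_of_tendsto_integral_rpow hpos
    ((tendsto_pow_atTop_atTop_of_one_lt hβ).atTop_mul_const hp₀) hpk
    (fun k => integrable_rpow_of_le hg hpos hM (hpk k).le) (fun k => ?_)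
    (hmult.tendsto_prod_tprod_nat.mul_const _)⟩
  simpa using le_prod_range_mul_of_le_mul
    (N := fun k => (∫ x, g x ^ (β ^ k * p₀) ∂μ) ^ (1 / (β ^ k * p₀)))
    (fun j => rpow_nonneg (by rw [mul_assoc]; exact (mul_pos hC₀ (hpk j)).le) _) hstep k
end

section
/- Let μ be a probability measure on a space X and let φ : X → ℝ be a bounded measurable function with essential sup φ = 0. Suppose for some p₀ > 0 and C ≥ 0 that exp(-p₀ · inf φ) ≤ C ∫ exp(-p₀ φ) dμ. Then there exist constants C' ≥ 0 and δ > 0, depending only on p₀ and C, such that μ({φ ≤ inf φ + C'}) ≥ δ. -/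
/-!
Let `m = essInf φ` and `A = {φ ≤ m + t}`. Since `φ ≥ m` a.e., splitting `∫ exp(-p₀ φ)` over `A`
and its complement gives `∫ exp(-p₀ φ) ≤ exp(-p₀ m) (μ A + exp(-p₀ t))`, so the hypothesis
yields `1 ≤ C (μ A + exp(-p₀ t))`. Choosing `t` with `exp(-p₀ t) = 1/(2C + 2)` forces
`μ A ≥ 1/(2C + 2)`.
-/

open MeasureTheory Real

section

variable {X : Type*} [MeasurableSpace X] {μ : Measure X}

lemma setIntegral_le_measureReal_mul [IsFiniteMeasure μ] {g : X → ℝ} {s : Set X} {c : ℝ}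
    (hs : MeasurableSet s) (hg : Integrable g μ) (h : ∀ᵐ x ∂μ, x ∈ s → g x ≤ c) :
    ∫ x in s, g x ∂μ ≤ μ.real s * c :=
  calc ∫ x in s, g x ∂μ ≤ ∫ _ in s, c ∂μ :=
        setIntegral_mono_on_ae hg.integrableOn integrableOn_const hs h
    _ = μ.real s * c := by rw [setIntegral_const, smul_eq_mul]

lemma integrable_exp_neg_mul_of_abs_le [IsFiniteMeasure μ] {φ : X → ℝ} {M : ℝ}
    (hφ : Measurable φ) (hM : ∀ x, |φ x| ≤ M) (p : ℝ) :
    Integrable (fun x ↦ exp (-(p * φ x))) μ := by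
  refine Integrable.of_bound (hφ.const_mul p).neg.exp.aestronglyMeasurable (exp (|p| * M))
    (ae_of_all _ fun x ↦ ?_)
  rw [norm_of_nonneg (exp_pos _).le, exp_le_exp]
  calc -(p * φ x) ≤ |p * φ x| := neg_le_abs _
    _ = |p| * |φ x| := abs_mul _ _
    _ ≤ |p| * M := mul_le_mul_of_nonneg_left (hM x) (abs_nonneg p)

lemma integral_exp_neg_mul_le_sublevel [IsProbabilityMeasure μ] {φ : X → ℝ} {p m : ℝ}
    (hp : 0 ≤ p) (hφ : Measurable φ) (hint : Integrable (fun x ↦ exp (-(p * φ x))) μ)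
    (hm : ∀ᵐ x ∂μ, m ≤ φ x) (t : ℝ) :
    ∫ x, exp (-(p * φ x)) ∂μ ≤
      exp (-(p * m)) * (μ.real {x | φ x ≤ m + t} + exp (-(p * t))) := by
  set A := {x | φ x ≤ m + t}
  have hA : MeasurableSet A := measurableSet_le hφ measurable_const
  have h_on : ∫ x in A, exp (-(p * φ x)) ∂μ ≤ μ.real A * exp (-(p * m)) :=
    setIntegral_le_measureReal_mul hA hint <| hm.mono fun x hx _ ↦
      exp_le_exp.2 (by nlinarith)
  have h_off : ∫ x in Aᶜ, exp (-(p * φ x)) ∂μ ≤ μ.real Aᶜ * exp (-(p * (m + t))) :=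
    setIntegral_le_measureReal_mul hA.compl hint <| ae_of_all _ fun x hx ↦
      exp_le_exp.2 (by have : m + t < φ x := not_le.1 hx; nlinarith)
  have h_compl : μ.real Aᶜ * exp (-(p * (m + t))) ≤ exp (-(p * (m + t))) :=
    mul_le_of_le_one_left (exp_pos _).le measureReal_le_one
  calc ∫ x, exp (-(p * φ x)) ∂μ
      = ∫ x in A, exp (-(p * φ x)) ∂μ + ∫ x in Aᶜ, exp (-(p * φ x)) ∂μ :=
        (integral_add_compl hA hint).symm
    _ ≤ μ.real A * exp (-(p * m)) + exp (-(p * (m + t))) := by linarith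
    _ = exp (-(p * m)) * (μ.real A + exp (-(p * t))) := by
        rw [show -(p * (m + t)) = -(p * m) + -(p * t) by ring, exp_add]; ring

lemma one_le_mul_measureReal_sublevel_add_exp [IsProbabilityMeasure μ] {φ : X → ℝ}
    {p m C : ℝ} (hp : 0 ≤ p) (hC : 0 ≤ C) (hφ : Measurable φ)
    (hint : Integrable (fun x ↦ exp (-(p * φ x))) μ) (hm : ∀ᵐ x ∂μ, m ≤ φ x)
    (hbound : exp (-(p * m)) ≤ C * ∫ x, exp (-(p * φ x)) ∂μ) (t : ℝ) :
    1 ≤ C * (μ.real {x | φ x ≤ m + t} + exp (-(p * t))) := by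
  have h := hbound.trans <|
    mul_le_mul_of_nonneg_left (integral_exp_neg_mul_le_sublevel hp hφ hint hm t) hC
  rw [mul_left_comm] at h
  exact (le_mul_iff_one_le_right (exp_pos _)).1 h

end

lemma inv_two_mul_add_two_le_of_one_le_mul {C a : ℝ} (hC : 0 ≤ C)
    (h : 1 ≤ C * (a + (2 * C + 2)⁻¹)) : (2 * C + 2)⁻¹ ≤ a := by
  set u := (2 * C + 2)⁻¹
  have hu : u * (2 * C + 2) = 1 := inv_mul_cancel₀ (by positivity)
  have hu_pos : 0 < u := by positivity
  by_contra! ha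
  nlinarith [mul_nonneg hC (sub_nonneg.2 ha.le)]

/-- From the exponential integral bound `exp(-p₀·essInf φ) ≤ C ∫ exp(-p₀ φ) dμ` on a
probability space one obtains, with constants depending only on `p₀` and `C`, a lower
bound on the measure of a sublevel set near the minimum. -/
theorem sublevel_bound_from_exponential
    (p₀ C : ℝ) (hp₀ : 0 < p₀) (hC : 0 ≤ C) :
    ∃ C' δ : ℝ, 0 ≤ C' ∧ 0 < δ ∧
      ∀ (X : Type) (_ : MeasurableSpace X) (μ : Measure X),
        IsProbabilityMeasure μ →
        ∀ φ : X → ℝ, Measurable φ → (∃ M : ℝ, ∀ x, |φ x| ≤ M) →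
        essSup φ μ = 0 →
        Real.exp (-(p₀ * essInf φ μ)) ≤ C * ∫ x, Real.exp (-(p₀ * φ x)) ∂μ →
        ENNReal.ofReal δ ≤ μ {x | φ x ≤ essInf φ μ + C'} := by
  have h2C : 0 < 2 * C + 2 := by linarith
  refine ⟨log (2 * C + 2) / p₀, (2 * C + 2)⁻¹, div_nonneg (log_nonneg (by linarith)) hp₀.le,
    inv_pos.2 h2C, ?_⟩
  intro X _ μ _ φ hφ ⟨M, hM⟩ _ hbound
  have h_essInf_le : ∀ᵐ x ∂μ, essInf φ μ ≤ φ x :=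
    ae_essInf_le (Filter.isBoundedUnder_of_eventually_ge (a := -M)
      (ae_of_all _ fun x ↦ neg_le_of_abs_le (hM x)))
  have key := one_le_mul_measureReal_sublevel_add_exp hp₀.le hC hφ
    (integrable_exp_neg_mul_of_abs_le hφ hM p₀) h_essInf_le hbound (log (2 * C + 2) / p₀)
  rw [mul_div_cancel₀ _ hp₀.ne', exp_neg, exp_log h2C] at key
  exact ENNReal.ofReal_le_of_le_toReal (inv_two_mul_add_two_le_of_one_le_mul hC key)
end
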